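/- arXiv:2304.06317 — 2 statements merged into one kernel-verified Lean document; each statement's English description precedes it below -/
import Mathlib

section
/- Let G be a finite connected simple graph on n ≥ 1 vertices with diameter D, and let k ≥ 1 be an integer. If T_k(G) ≠ D, then D·k ≤ 3·n·T_k(G)² (equivalently, sqrt((D/(3n))·k) ≤ T_k(G)). -/
/-!
Let `T = T_k(G) < D`. Then every vertex `v` has `T_k(v) ≤ T < D`, so `k ≤ T · |B_T(v)|`.
Along a diametral geodesic, the vertices at positions `0, q, 2q, …` with `q = 2T + 1` are
`m = ⌊D / q⌋ + 1` vertices pairwise at distance at least `q`, so their balls of radius `T` are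
disjoint. Counting vertices gives `m · k ≤ T · n`, and `D < m · q ≤ 3 T m` then yields
`D · k ≤ 3 n T²`.
-/

open SimpleGraph

/-- The ball of radius `t` around `v`: all vertices at hop distance at most `t` from `v`. -/
def SimpleGraph.hopBall {V : Type*} (G : SimpleGraph V) (v : V) (t : ℕ) : Set V :=
  {w | G.dist v w ≤ t}

/-- The broadcast quality of a vertex `v`:
`T_k(v) = min ({t : t ≥ 1 and t·|B_t(v)| ≥ k} ∪ {D})` where `D` is the diameter. -/
noncomputable def SimpleGraph.broadcastQuality {V : Type*} (G : SimpleGraph V) (k : ℕ)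
    (v : V) : ℕ :=
  sInf ({t : ℕ | 1 ≤ t ∧ k ≤ t * (G.hopBall v t).ncard} ∪ {G.diam})

/-- The broadcast quality of the graph: `T_k(G) = max_v T_k(v)`. -/
noncomputable def SimpleGraph.broadcastQualityGraph {V : Type*} [Fintype V]
    (G : SimpleGraph V) (k : ℕ) : ℕ :=
  Finset.univ.sup (fun v => G.broadcastQuality k v)

namespace SimpleGraph

variable {V : Type*} {G : SimpleGraph V}

lemma Walk.sub_le_dist_getVert_of_length_eq_dist (hconn : G.Connected) {u w : V}
    (p : G.Walk u w) (hp : p.length = G.dist u w) (i : ℕ) {j : ℕ} (hj : j ≤ p.length) :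
    j - i ≤ G.dist (p.getVert i) (p.getVert j) := by
  have hu : G.dist u (p.getVert i) ≤ i := (dist_le (p.take i)).trans (by simp [Walk.take_length])
  have hw : G.dist (p.getVert j) w ≤ p.length - j :=
    (dist_le (p.drop j)).trans_eq (p.drop_length j)
  have h₁ : G.dist u w ≤ G.dist u (p.getVert i) + G.dist (p.getVert i) w := hconn.dist_triangle
  have h₂ : G.dist (p.getVert i) w ≤
      G.dist (p.getVert i) (p.getVert j) + G.dist (p.getVert j) w := hconn.dist_triangle
  omega

lemma Connected.exists_pairwise_le_dist (hconn : G.Connected) (u w : V) (q : ℕ) :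
    ∃ c : ℕ → V, (Finset.range (G.dist u w / q + 1) : Set ℕ).Pairwise
      fun i j ↦ q ≤ G.dist (c i) (c j) := by
  obtain ⟨p, hp⟩ := hconn.exists_walk_length_eq_dist u w
  have hmul_le {i : ℕ} (hi : i < G.dist u w / q + 1) : i * q ≤ p.length :=
    hp ▸ (Nat.mul_le_mul_right q (Nat.lt_succ_iff.mp hi)).trans (Nat.div_mul_le_self _ q)
  have hlt {i j : ℕ} (hij : i < j) (hj : j < G.dist u w / q + 1) :
      q ≤ G.dist (p.getVert (i * q)) (p.getVert (j * q)) := by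
    refine le_trans ?_ (p.sub_le_dist_getVert_of_length_eq_dist hconn hp _ (hmul_le hj))
    rw [← Nat.sub_mul]
    exact Nat.le_mul_of_pos_left q (Nat.sub_pos_of_lt hij)
  refine ⟨fun i ↦ p.getVert (i * q), fun i hi j hj hij ↦ ?_⟩
  simp only [Finset.coe_range, Set.mem_Iio] at hi hj
  rcases hij.lt_or_gt with hij | hij
  · exact hlt hij hj
  · exact dist_comm (G := G) ▸ hlt hij hi

lemma disjoint_hopBall_of_add_lt_dist (hconn : G.Connected) {u v : V} {r s : ℕ}
    (h : r + s < G.dist u v) : Disjoint (G.hopBall u r) (G.hopBall v s) := by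
  refine Set.disjoint_left.mpr fun x (hxu : G.dist u x ≤ r) (hxv : G.dist v x ≤ s) ↦ ?_
  have := hconn.dist_triangle (u := u) (v := x) (w := v)
  rw [dist_comm (u := x)] at this
  omega

lemma sum_ncard_hopBall_le_card [Finite V] (hconn : G.Connected) {ι : Type*} (s : Finset ι)
    (c : ι → V) (t : ℕ) (hc : (s : Set ι).Pairwise fun i j ↦ 2 * t < G.dist (c i) (c j)) :
    ∑ i ∈ s, (G.hopBall (c i) t).ncard ≤ Nat.card V := by
  have hdisj : (s : Set ι).PairwiseDisjoint fun i ↦ G.hopBall (c i) t :=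
    fun i hi j hj hij ↦ disjoint_hopBall_of_add_lt_dist hconn (by have := hc hi hj hij; omega)
  rw [← finsum_mem_coe_finset,
    ← s.finite_toSet.ncard_biUnion (fun _ _ ↦ Set.toFinite _) hdisj]
  exact Set.ncard_le_card _

lemma hopBall_mono (v : V) {r s : ℕ} (h : r ≤ s) : G.hopBall v r ⊆ G.hopBall v s :=
  fun _ hw ↦ le_trans hw h

variable (G) (k : ℕ)

lemma broadcastQuality_le_diam (v : V) : G.broadcastQuality k v ≤ G.diam :=
  Nat.sInf_le (Or.inr rfl)

lemma broadcastQuality_spec_of_lt_diam {v : V} (h : G.broadcastQuality k v < G.diam) :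
    1 ≤ G.broadcastQuality k v ∧
      k ≤ G.broadcastQuality k v * (G.hopBall v (G.broadcastQuality k v)).ncard := by
  rcases Nat.sInf_mem (s := {t | 1 ≤ t ∧ k ≤ t * (G.hopBall v t).ncard} ∪ {G.diam})
    ⟨G.diam, Or.inr rfl⟩ with hmem | hdiam
  · exact hmem
  · exact absurd hdiam h.ne

lemma le_mul_ncard_hopBall_of_broadcastQuality_le [Finite V] {v : V} {t : ℕ}
    (hv : G.broadcastQuality k v ≤ t) (ht : t < G.diam) : k ≤ t * (G.hopBall v t).ncard :=
  (G.broadcastQuality_spec_of_lt_diam k (hv.trans_lt ht)).2.trans <|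
    Nat.mul_le_mul hv (Set.ncard_le_ncard (hopBall_mono v hv) (Set.toFinite _))

variable [Fintype V]

lemma broadcastQuality_le_broadcastQualityGraph (v : V) :
    G.broadcastQuality k v ≤ G.broadcastQualityGraph k :=
  Finset.le_sup (f := G.broadcastQuality k) (Finset.mem_univ v)

lemma broadcastQualityGraph_le_diam : G.broadcastQualityGraph k ≤ G.diam :=
  Finset.sup_le fun v _ ↦ G.broadcastQuality_le_diam k v

lemma one_le_broadcastQualityGraph_of_lt_diam [Nonempty V]
    (h : G.broadcastQualityGraph k < G.diam) : 1 ≤ G.broadcastQualityGraph k := by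
  have hv := G.broadcastQuality_le_broadcastQualityGraph k (Classical.arbitrary V)
  exact (G.broadcastQuality_spec_of_lt_diam k (hv.trans_lt h)).1.trans hv

end SimpleGraph

theorem lower_bound_on_Tk_general {V : Type*} [Fintype V] (G : SimpleGraph V)
    (hconn : G.Connected) (k : ℕ)
    (hne : G.broadcastQualityGraph k ≠ G.diam) :
    G.diam * k ≤ 3 * Fintype.card V * (G.broadcastQualityGraph k) ^ 2 := by
  have := hconn.nonempty
  set T := G.broadcastQualityGraph k
  have hTD : T < G.diam := (G.broadcastQualityGraph_le_diam k).lt_of_ne hne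
  have hT : 1 ≤ T := G.one_le_broadcastQualityGraph_of_lt_diam k hTD
  obtain ⟨u, w, huw⟩ := G.exists_dist_eq_diam
  obtain ⟨c, hc⟩ := hconn.exists_pairwise_le_dist u w (2 * T + 1)
  rw [huw] at hc
  set m := G.diam / (2 * T + 1) + 1
  have hpack : m * k ≤ T * Fintype.card V :=
    calc m * k = ∑ _i ∈ Finset.range m, k := by simp
      _ ≤ ∑ i ∈ Finset.range m, T * (G.hopBall (c i) T).ncard :=
        Finset.sum_le_sum fun i _ ↦ G.le_mul_ncard_hopBall_of_broadcastQuality_le k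
          (G.broadcastQuality_le_broadcastQualityGraph k (c i)) hTD
      _ = T * ∑ i ∈ Finset.range m, (G.hopBall (c i) T).ncard := (Finset.mul_sum ..).symm
      _ ≤ T * Fintype.card V := Nat.mul_le_mul_left T <| Nat.card_eq_fintype_card (α := V) ▸
        sum_ncard_hopBall_le_card hconn _ c T (hc.mono' fun _ _ h ↦ h)
  have hDm : G.diam < m * (2 * T + 1) := by
    rw [Nat.succ_mul]; exact Nat.lt_div_mul_add (Nat.succ_pos _)
  calc G.diam * k ≤ m * (2 * T + 1) * k := Nat.mul_le_mul_right k hDm.le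
    _ = (2 * T + 1) * (m * k) := by ring
    _ ≤ (3 * T) * (T * Fintype.card V) := Nat.mul_le_mul (by omega) hpack
    _ = 3 * Fintype.card V * T ^ 2 := by ring

theorem lower_bound_on_Tk {V : Type*} [Fintype V] [Nonempty V] (G : SimpleGraph V)
    (hconn : G.Connected) (k : ℕ) (hk : 1 ≤ k)
    (hne : G.broadcastQualityGraph k ≠ G.diam) :
    G.diam * k ≤ 3 * Fintype.card V * (G.broadcastQualityGraph k) ^ 2 :=
  lower_bound_on_Tk_general G hconn k hne
end

section
/- Let G be the d-dimensional square grid graph with side length m (d ≥ 1, m ≥ 2), let 0 be the all-zeros corner vertex, and let k ≥ 1 be an integer. Suppose there exists a positive integer t < m with t·C(t+d, d) ≥ k, and let t* be the least such t. Then T_k(0) = t*. -/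
open SimpleGraph

/-- The `d`-dimensional square grid graph with side length `m`: vertices are functions
`Fin d → Fin m`, and `x`, `y` are adjacent iff they differ by exactly one in exactly one
coordinate and agree elsewhere. -/
def gridGraph (d m : ℕ) : SimpleGraph (Fin d → Fin m) where
  Adj x y := ∃ i : Fin d,
    (((x i : ℕ) + 1 = (y i : ℕ)) ∨ ((y i : ℕ) + 1 = (x i : ℕ))) ∧ ∀ j : Fin d, j ≠ i → x j = y j
  symm := by
    constructor
    rintro x y ⟨i, h1, h2⟩
    exact ⟨i, h1.symm, fun j hj => (h2 j hj).symm⟩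
  loopless := by
    constructor
    rintro x ⟨i, h1, -⟩
    omega

/-
From the corner, graph distance is the coordinate sum: an edge changes the sum by one, and
lowering a positive coordinate is a step towards the corner. So for `t < m` the ball `B_t(0)` is
the set of lattice points of coordinate sum at most `t`, of size `C(t + d, d)` by the hockey-stick
identity, and the radii `t < m` admissible for `T_k(0)` are exactly those of the hypothesis. Larger
radii and the diameter, which is at least `m - 1`, do not undercut `t*`.
-/

open Finset

namespace gridGraph

variable {d m : ℕ}

lemma sum_le_sum_add_one_of_adj {x y : Fin d → Fin m} (h : (gridGraph d m).Adj x y) :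
    ∑ i, (y i : ℕ) ≤ ∑ i, (x i : ℕ) + 1 := by
  obtain ⟨i, hi, hne⟩ := h
  have hrest : ∑ j ∈ {i}ᶜ, (y j : ℕ) = ∑ j ∈ {i}ᶜ, (x j : ℕ) :=
    sum_congr rfl fun j hj => by rw [hne j (by simpa using hj)]
  rw [Fintype.sum_eq_add_sum_compl i, Fintype.sum_eq_add_sum_compl i fun j => (x j : ℕ), hrest]
  omega

lemma sum_le_sum_add_length {x y : Fin d → Fin m} (p : (gridGraph d m).Walk x y) :
    ∑ i, (y i : ℕ) ≤ ∑ i, (x i : ℕ) + p.length := by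
  induction p with
  | nil => simp
  | cons h _ ih =>
    have := sum_le_sum_add_one_of_adj h
    rw [Walk.length_cons]
    omega

lemma exists_adj_sum_eq {w : Fin d → Fin m} {n : ℕ} (hw : ∑ i, (w i : ℕ) = n + 1) :
    ∃ w', (gridGraph d m).Adj w' w ∧ ∑ i, (w' i : ℕ) = n := by
  obtain ⟨i, hi⟩ : ∃ i, (w i : ℕ) ≠ 0 := by
    by_contra! h
    simp [h] at hw
  refine ⟨Function.update w i ⟨w i - 1, by omega⟩,
    ⟨i, Or.inl (by rw [Function.update_self, Fin.val_mk]; omega), fun j hj => by simp [hj]⟩, ?_⟩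
  rw [Fintype.sum_eq_add_sum_compl i] at hw ⊢
  simp only [Function.update_self]
  rw [sum_congr rfl fun j hj => by rw [Function.update_of_ne (by simpa using hj)]]
  omega

lemma exists_walk_length_eq_sum (hm : 0 < m) (w : Fin d → Fin m) :
    ∃ p : (gridGraph d m).Walk (fun _ => ⟨0, hm⟩) w, p.length = ∑ i, (w i : ℕ) := by
  generalize hn : ∑ i, (w i : ℕ) = n
  induction n generalizing w with
  | zero =>
    obtain rfl : w = fun _ => ⟨0, hm⟩ :=
      funext fun i => Fin.ext <| by simp_all [sum_eq_zero_iff]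
    exact ⟨Walk.nil, rfl⟩
  | succ n ih =>
    obtain ⟨w', hadj, hw'⟩ := exists_adj_sum_eq hn
    obtain ⟨p, hp⟩ := ih w' hw'
    exact ⟨p.concat hadj, by rw [Walk.length_concat, hp]⟩

theorem dist_corner (hm : 0 < m) (w : Fin d → Fin m) :
    (gridGraph d m).dist (fun _ => ⟨0, hm⟩) w = ∑ i, (w i : ℕ) := by
  obtain ⟨p, hp⟩ := exists_walk_length_eq_sum hm w
  refine le_antisymm (hp ▸ dist_le p) ?_
  obtain ⟨q, hq⟩ := (Walk.reachable p).exists_walk_length_eq_dist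
  simpa [hq] using sum_le_sum_add_length q

theorem connected (hm : 0 < m) : (gridGraph d m).Connected :=
  (connected_iff_exists_forall_reachable _).2
    ⟨_, fun w => (exists_walk_length_eq_sum hm w).elim fun p _ => p.reachable⟩

theorem sub_one_le_diam (hd : 0 < d) (hm : 0 < m) : m - 1 ≤ (gridGraph d m).diam := by
  have := (connected (d := d) hm).nonempty
  have hne : (gridGraph d m).ediam ≠ ⊤ := connected_iff_ediam_ne_top.1 (connected hm)
  have := (gridGraph d m).dist_le_diam hne (u := fun _ => ⟨0, hm⟩)
    (v := fun _ => ⟨m - 1, by omega⟩)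
  rw [dist_corner, sum_const, card_univ, Fintype.card_fin, smul_eq_mul] at this
  exact le_trans (Nat.le_mul_of_pos_left _ hd) this

lemma card_filter_sum_le_succ (t : ℕ) :
    #{x : Fin (d + 1) → Fin m | ∑ i, (x i : ℕ) ≤ t}
      = ∑ a : Fin m, #{y : Fin d → Fin m | a + ∑ i, (y i : ℕ) ≤ t} := by
  simp only [card_filter]
  rw [← (Fin.consEquiv fun _ => Fin m).sum_comp, Fintype.sum_prod_type]
  simp [Fin.consEquiv, Fin.sum_univ_succ]

-- Since `t < m`, the upper bound on the coordinates never binds: this is stars and bars.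
theorem card_filter_sum_le {t : ℕ} (ht : t < m) :
    #{x : Fin d → Fin m | ∑ i, (x i : ℕ) ≤ t} = (t + d).choose d := by
  induction d generalizing t with
  | zero => simp
  | succ d ih =>
    have hfiber (a : ℕ) : #{y : Fin d → Fin m | a + ∑ i, (y i : ℕ) ≤ t}
        = if a ≤ t then (t - a + d).choose d else 0 := by
      split_ifs with ha
      · rw [← ih (by omega : t - a < m)]
        congr 1
        ext y
        simp only [mem_filter, mem_univ, true_and]
        omega
      · rw [card_eq_zero, filter_eq_empty_iff]
        intro y _
        omega
    calc #{x : Fin (d + 1) → Fin m | ∑ i, (x i : ℕ) ≤ t}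
        = ∑ a ∈ range m, if a ≤ t then (t - a + d).choose d else 0 := by
          rw [card_filter_sum_le_succ, ← Fin.sum_univ_eq_sum_range]
          simp only [hfiber]
      _ = ∑ a ∈ range (t + 1), (t - a + d).choose d := by
          rw [← sum_subset (range_subset_range.2 ht) fun a _ ha => if_neg (by simpa using ha)]
          exact sum_congr rfl fun a ha => if_pos (by simpa [Nat.lt_succ_iff] using ha)
      _ = ∑ a ∈ range (t + 1), (a + d).choose d := by
          simpa using sum_range_reflect (fun a => (a + d).choose d) (t + 1)
      _ = (t + (d + 1)).choose (d + 1) := by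
          rw [Nat.sum_range_add_choose, add_assoc]

theorem ncard_hopBall_corner (hm : 0 < m) {t : ℕ} (ht : t < m) :
    ((gridGraph d m).hopBall (fun _ => ⟨0, hm⟩) t).ncard = (t + d).choose d := by
  have : (gridGraph d m).hopBall (fun _ => ⟨0, hm⟩) t = {w | ∑ i, (w i : ℕ) ≤ t} := by
    ext w
    simp only [hopBall, Set.mem_ofPred_eq, dist_corner]
  rw [this, Set.ncard_eq_toFinset_card', Set.toFinset_ofPred, card_filter_sum_le ht]

end gridGraph

theorem SimpleGraph.broadcastQuality_eq {V : Type*} (G : SimpleGraph V) (v : V) {k t : ℕ}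
    (ht : 1 ≤ t) (hk : k ≤ t * (G.hopBall v t).ncard)
    (hmin : ∀ s, 1 ≤ s → s < t → s * (G.hopBall v s).ncard < k) (hdiam : t ≤ G.diam) :
    G.broadcastQuality k v = t := by
  refine le_antisymm (Nat.sInf_le (Or.inl ⟨ht, hk⟩)) (le_csInf ⟨_, Or.inr rfl⟩ ?_)
  rintro s (⟨hs, hsk⟩ | rfl)
  · by_contra! hst
    exact (hmin s hs hst).not_ge hsk
  · exact hdiam

theorem gridGraph_Tk_corner (d m : ℕ) (hd : 1 ≤ d) (hm : 2 ≤ m) (k : ℕ)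
    (tstar : ℕ) (ht1 : 1 ≤ tstar) (ht2 : tstar < m) (ht3 : k ≤ tstar * (tstar + d).choose d)
    (htmin : ∀ t : ℕ, 1 ≤ t → t < m → k ≤ t * (t + d).choose d → tstar ≤ t) :
    (gridGraph d m).broadcastQuality k (fun _ => (⟨0, by omega⟩ : Fin m)) = tstar := by
  have hm0 : 0 < m := by omega
  have hball {t : ℕ} (ht : t < m) := gridGraph.ncard_hopBall_corner (d := d) hm0 ht
  refine broadcastQuality_eq _ _ ht1 (by rwa [hball ht2]) (fun s hs hst => ?_)
    ((Nat.le_sub_one_of_lt ht2).trans (gridGraph.sub_one_le_diam hd hm0))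
  rw [hball (hst.trans ht2)]
  by_contra! hsk
  exact (htmin s hs (hst.trans ht2) hsk).not_gt hst
end
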